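/- For every irrational real number α one has 𝔨*(α) ≥ 𝔨(α) ≥ 2·λ(α). -/

import Mathlib

open Filter Real Set

/-- Iterates of the Gauss map starting from `α`: `x₀ = α`, `x_{n+1} = 1 / fract (xₙ)`. -/
noncomputable def gaussIter (α : ℝ) : ℕ → ℝ
  | 0 => α
  | n + 1 => (Int.fract (gaussIter α n))⁻¹

/-- Partial quotients of the continued fraction `α = [a₀; a₁, a₂, …]`. -/
noncomputable def cfA (α : ℝ) (n : ℕ) : ℤ := ⌊gaussIter α n⌋

/-- Denominators of convergents, with shifted index: `cfQ α 0 = q₋₁ = 0`,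
`cfQ α 1 = q₀ = 1`, and `cfQ α (n+1) = qₙ` where `qₙ = aₙ q_{n-1} + q_{n-2}`. -/
noncomputable def cfQ (α : ℝ) : ℕ → ℤ
  | 0 => 0
  | 1 => 1
  | n + 2 => cfA α (n + 1) * cfQ α (n + 1) + cfQ α n

/-- Numerators of convergents, with shifted index: `cfP α 0 = p₋₁ = 1`,
`cfP α 1 = p₀ = ⌊α⌋`, and `cfP α (n+1) = pₙ` where `pₙ = aₙ p_{n-1} + p_{n-2}`. -/
noncomputable def cfP (α : ℝ) : ℕ → ℤ
  | 0 => 1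
  | 1 => ⌊α⌋
  | n + 2 => cfA α (n + 1) * cfP α (n + 1) + cfP α n

/-- `qₙ`, the denominator of the `n`-th convergent of `α`. -/
noncomputable def cfDen (α : ℝ) (n : ℕ) : ℤ := cfQ α (n + 1)

/-- `pₙ`, the numerator of the `n`-th convergent of `α`. -/
noncomputable def cfNum (α : ℝ) (n : ℕ) : ℤ := cfP α (n + 1)

/-- `ξₙ = |qₙ α − pₙ|`. -/
noncomputable def cfXi (α : ℝ) (n : ℕ) : ℝ := |(cfDen α n : ℝ) * α - (cfNum α n : ℝ)|

/-- `ψ_α(t) = min { ‖qα‖ : q ∈ ℤ, 1 ≤ q ≤ t }`. -/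
noncomputable def psiFn (α t : ℝ) : ℝ :=
  sInf {x : ℝ | ∃ p q : ℤ, 1 ≤ q ∧ (q : ℝ) ≤ t ∧ x = |(q : ℝ) * α - (p : ℝ)|}

/-- `ψ_α^[2](t)`: the same minimum but over pairs `(p,q)` that are not `(pₙ,qₙ)` for any `n ≥ 0`. -/
noncomputable def psi2Fn (α t : ℝ) : ℝ :=
  sInf {x : ℝ | ∃ p q : ℤ, 1 ≤ q ∧ (q : ℝ) ≤ t ∧
    (∀ n : ℕ, ¬(p = cfNum α n ∧ q = cfDen α n)) ∧ x = |(q : ℝ) * α - (p : ℝ)|}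

/-- `ψ_α^[2]*(t)`: the same minimum but over pairs `(p,q)` with `p/q ≠ pₙ/qₙ` for all `n ≥ 0`. -/
noncomputable def psi2sFn (α t : ℝ) : ℝ :=
  sInf {x : ℝ | ∃ p q : ℤ, 1 ≤ q ∧ (q : ℝ) ≤ t ∧
    (∀ n : ℕ, (p : ℝ) / (q : ℝ) ≠ (cfNum α n : ℝ) / (cfDen α n : ℝ)) ∧
    x = |(q : ℝ) * α - (p : ℝ)|}

/-- `λ(α) = liminf_{t→∞} t · ψ_α(t)`. -/
noncomputable def lamOf (α : ℝ) : ℝ := Filter.liminf (fun t : ℝ => t * psiFn α t) Filter.atTop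

/-- `𝔨(α) = liminf_{t→∞} t · ψ_α^[2](t)`. -/
noncomputable def kOf (α : ℝ) : ℝ := Filter.liminf (fun t : ℝ => t * psi2Fn α t) Filter.atTop

/-- `𝔨*(α) = liminf_{t→∞} t · ψ_α^[2]*(t)`. -/
noncomputable def ksOf (α : ℝ) : ℝ := Filter.liminf (fun t : ℝ => t * psi2sFn α t) Filter.atTop

/-- `α` and `β` are equivalent: `β = (aα+b)/(cα+d)` with `a,b,c,d ∈ ℤ`, `|ad − bc| = 1`. -/
def CFEquiv (α β : ℝ) : Prop :=
  ∃ a b c d : ℤ, |a * d - b * c| = 1 ∧ β = ((a : ℝ) * α + (b : ℝ)) / ((c : ℝ) * α + (d : ℝ))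

/-- The spectrum `𝕃₂ = {𝔨(α) : α irrational}`. -/
def L2 : Set ℝ := {x : ℝ | ∃ α : ℝ, Irrational α ∧ kOf α = x}

/-- The spectrum `𝕃₂* = {𝔨*(α) : α irrational}`. -/
def L2s : Set ℝ := {x : ℝ | ∃ α : ℝ, Irrational α ∧ ksOf α = x}

/-- `𝔔(α)`: the set of positive integers at which `ψ_α^[2]` is discontinuous. -/
def QSet (α : ℝ) : Set ℤ := {m : ℤ | 0 < m ∧ ¬ ContinuousAt (psi2Fn α) (m : ℝ)}

/-- `𝔛(α)`: the set of positive integers at which `ψ_α^[2]*` is discontinuous. -/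
def XSet (α : ℝ) : Set ℤ := {m : ℤ | 0 < m ∧ ¬ ContinuousAt (psi2sFn α) (m : ℝ)}

/-- The members of the list `l` are successive elements of `S`: they belong to `S`,
are listed in increasing order, and no element of `S` lies strictly between
consecutive listed ones. -/
def SuccessiveIn (S : Set ℤ) (l : List ℤ) : Prop :=
  (∀ x ∈ l, x ∈ S) ∧ l.Chain' (fun x y => x < y ∧ ∀ z ∈ S, ¬(x < z ∧ z < y))

/-- `κ¹ₙ = (q_{n-2} + q_{n-1})(ξ_{n-2} − ξ_{n-1})`. -/
noncomputable def kap1 (α : ℝ) (n : ℕ) : ℝ :=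
  ((cfDen α (n - 2) + cfDen α (n - 1) : ℤ) : ℝ) * (cfXi α (n - 2) - cfXi α (n - 1))

/-- `κ²ₙ = (qₙ − q_{n-1})(ξ_{n-1} + ξₙ)`. -/
noncomputable def kap2 (α : ℝ) (n : ℕ) : ℝ :=
  ((cfDen α n - cfDen α (n - 1) : ℤ) : ℝ) * (cfXi α (n - 1) + cfXi α n)

/-- `κ³ₙ = (2q_{n-2} + q_{n-1})(2ξ_{n-2} − ξ_{n-1})`. -/
noncomputable def kap3 (α : ℝ) (n : ℕ) : ℝ :=
  ((2 * cfDen α (n - 2) + cfDen α (n - 1) : ℤ) : ℝ) * (2 * cfXi α (n - 2) - cfXi α (n - 1))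

/-- `κ⁴ₙ = 4 q_{n-1} ξ_{n-1}`. -/
noncomputable def kap4 (α : ℝ) (n : ℕ) : ℝ :=
  ((4 * cfDen α (n - 1) : ℤ) : ℝ) * cfXi α (n - 1)

/-!
Write `θₙ = qₙα − pₙ` and `ξₙ = |θₙ|`. Since the matrices of consecutive convergents are
unimodular, every pair is `(p, q) = u (pₙ, qₙ) + v (pₙ₋₁, qₙ₋₁)` with `u, v ∈ ℤ`, and as the `θₙ`
alternate in sign, `|qα − p| = |u ξₙ − v ξₙ₋₁|`. For `qₙ ≤ q < qₙ₊₁` and `(p, q) ≠ (pₙ, qₙ)` a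
case analysis on the signs of `u, v`, using `ξₙ₋₁ = aₙ₊₁ ξₙ + ξₙ₊₁`, gives
`q |qα − p| ≥ 2 min (qₙ₋₁ ξₙ₋₁, qₙ ξₙ, qₙ₊₁ ξₙ₊₁)`. Hence `𝔨 ≥ 2 liminf qₙ ξₙ ≥ 2 λ`, the last step
because `ψ(qₙ) ≤ ξₙ`. The bound `𝔨 ≤ 𝔨*` is `ψ^[2] ≤ ψ^[2]*`; what needs an argument is that the
liminf defining `𝔨*` is not a junk value. For that, the fractions `(pₙ₊₁ − pₙ)/(qₙ₊₁ − qₙ)` (when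
`aₙ₊₁ ≥ 2`) and `(pₙ₊₁ + pₙ₋₁)/(qₙ₊₁ + qₙ₋₁)` (when `aₙ₊₁ = 1`) are reduced with denominators
strictly between consecutive `qₘ`, so they are not convergents, and they satisfy `q |qα − p| ≤ 6`.
-/

/-- `cfTheta α (n + 1) = qₙ α − pₙ`, with the index shifted as in `cfQ` and `cfP`. -/
noncomputable def cfTheta (α : ℝ) (n : ℕ) : ℝ := (cfQ α n : ℝ) * α - (cfP α n : ℝ)

lemma abs_mul_add_mul_of_mul_neg {a b : ℝ} (h : a * b < 0) (u v : ℝ) :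
    |u * a + v * b| = |(u * |a| - v * |b|)| := by
  rcases lt_or_gt_of_ne (left_ne_zero_of_mul h.ne) with ha | ha
  · have hb : 0 < b := pos_of_mul_neg_right h ha.le
    rw [abs_of_neg ha, abs_of_pos hb, ← abs_neg]
    congr 1; ring
  · have hb : b < 0 := neg_of_mul_neg_right h ha.le
    rw [abs_of_pos ha, abs_of_neg hb]
    congr 1; ring

lemma isCoprime_of_mul_sub_mul_eq_neg_one_pow {p q a b : ℤ} {j : ℕ}
    (h : p * b - q * a = (-1) ^ j) : IsCoprime p q := by
  have hε : ((-1 : ℤ) ^ j) ^ 2 = 1 := by rw [← pow_mul, mul_comm, pow_mul]; norm_num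
  exact ⟨(-1) ^ j * b, -((-1) ^ j * a), by linear_combination (-1) ^ j * h + hε⟩

lemma Irrational.fract {x : ℝ} (hx : Irrational x) : Irrational (Int.fract x) :=
  hx.sub_intCast _

lemma Irrational.fract_pos {x : ℝ} (hx : Irrational x) : 0 < Int.fract x :=
  (Int.fract_nonneg x).lt_of_ne' hx.fract.ne_zero

section ContinuedFraction

variable {α : ℝ}

lemma irrational_gaussIter (hα : Irrational α) : ∀ n, Irrational (gaussIter α n)
  | 0 => hα
  | n + 1 => (irrational_gaussIter hα n).fract.inv

lemma one_lt_gaussIter_succ (hα : Irrational α) (n : ℕ) : 1 < gaussIter α (n + 1) :=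
  (one_lt_inv₀ (irrational_gaussIter hα n).fract_pos).2 (Int.fract_lt_one _)

lemma one_le_cfA_succ (hα : Irrational α) (n : ℕ) : 1 ≤ cfA α (n + 1) := by
  rw [cfA, Int.le_floor]
  exact_mod_cast (one_lt_gaussIter_succ hα n).le

lemma cfQ_succ_succ (α : ℝ) (n : ℕ) : cfQ α (n + 2) = cfA α (n + 1) * cfQ α (n + 1) + cfQ α n :=
  rfl

lemma cfP_succ_succ (α : ℝ) (n : ℕ) : cfP α (n + 2) = cfA α (n + 1) * cfP α (n + 1) + cfP α n :=
  rfl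

lemma cfTheta_succ_succ (α : ℝ) (n : ℕ) :
    cfTheta α (n + 2) = cfA α (n + 1) * cfTheta α (n + 1) + cfTheta α n := by
  simp only [cfTheta, cfQ_succ_succ, cfP_succ_succ]
  push_cast
  ring

lemma cfXi_eq_abs_cfTheta (α : ℝ) (n : ℕ) : cfXi α n = |cfTheta α (n + 1)| := rfl

lemma cfP_mul_cfQ_succ_sub (α : ℝ) :
    ∀ n, cfP α n * cfQ α (n + 1) - cfP α (n + 1) * cfQ α n = (-1) ^ n
  | 0 => by simp [cfP, cfQ]
  | n + 1 => by
    rw [cfQ_succ_succ, cfP_succ_succ, pow_succ, ← cfP_mul_cfQ_succ_sub α n]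
    ring

lemma cfTheta_succ_mul_gaussIter (hα : Irrational α) :
    ∀ n, cfTheta α (n + 1) * gaussIter α (n + 1) = -cfTheta α n
  | 0 => by
    have h : Int.fract α ≠ 0 := hα.fract_pos.ne'
    simp only [cfTheta, cfQ, cfP, gaussIter, Int.fract] at h ⊢
    field_simp
    push_cast
    ring
  | n + 1 => by
    have ih := cfTheta_succ_mul_gaussIter hα n
    have hfr : Int.fract (gaussIter α (n + 1)) = gaussIter α (n + 1) - cfA α (n + 1) := rfl
    have hne : Int.fract (gaussIter α (n + 1)) ≠ 0 :=
      (irrational_gaussIter hα (n + 1)).fract_pos.ne'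
    rw [show gaussIter α (n + 2) = (Int.fract (gaussIter α (n + 1)))⁻¹ from rfl,
      cfTheta_succ_succ, ← div_eq_mul_inv, div_eq_iff hne, hfr]
    linear_combination ih

lemma cfTheta_ne_zero (hα : Irrational α) : ∀ n, cfTheta α n ≠ 0
  | 0 => by simp [cfTheta, cfQ, cfP]
  | n + 1 => fun h ↦ cfTheta_ne_zero hα n (by
    simpa [h] using (cfTheta_succ_mul_gaussIter hα n).symm)

lemma cfTheta_mul_cfTheta_succ_neg (hα : Irrational α) (n : ℕ) :
    cfTheta α n * cfTheta α (n + 1) < 0 := by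
  rw [← neg_neg (cfTheta α n), ← cfTheta_succ_mul_gaussIter hα n]
  have := one_lt_gaussIter_succ hα n
  have := cfTheta_ne_zero hα (n + 1)
  nlinarith [sq_pos_of_ne_zero this]

lemma abs_cfTheta_succ_lt (hα : Irrational α) (n : ℕ) :
    |cfTheta α (n + 1)| < |cfTheta α n| := by
  rw [← abs_neg (cfTheta α n), ← cfTheta_succ_mul_gaussIter hα n, abs_mul,
    abs_of_pos (zero_lt_one.trans (one_lt_gaussIter_succ hα n))]
  exact lt_mul_of_one_lt_right (abs_pos.2 (cfTheta_ne_zero hα _)) (one_lt_gaussIter_succ hα n)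

lemma abs_cfTheta_eq (hα : Irrational α) (n : ℕ) :
    |cfTheta α n| = cfA α (n + 1) * |cfTheta α (n + 1)| + |cfTheta α (n + 2)| := by
  have h := abs_mul_add_mul_of_mul_neg (cfTheta_mul_cfTheta_succ_neg hα (n + 1))
    (-(cfA α (n + 1) : ℝ)) 1
  rw [show -(cfA α (n + 1) : ℝ) * cfTheta α (n + 1) + 1 * cfTheta α (n + 2) = cfTheta α n by
    rw [cfTheta_succ_succ]; ring] at h
  have ha : (0 : ℝ) ≤ cfA α (n + 1) := by exact_mod_cast (one_le_cfA_succ hα n).trans' zero_le_one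
  rw [h, show -(cfA α (n + 1) : ℝ) * |cfTheta α (n + 1)| - 1 * |cfTheta α (n + 2)|
    = -(cfA α (n + 1) * |cfTheta α (n + 1)| + |cfTheta α (n + 2)|) by ring,
    abs_neg, abs_of_nonneg (by positivity)]

lemma cfQ_nonneg_and_one_le_succ (hα : Irrational α) : ∀ n, 0 ≤ cfQ α n ∧ 1 ≤ cfQ α (n + 1)
  | 0 => by simp [cfQ]
  | n + 1 => by
    obtain ⟨h₀, h₁⟩ := cfQ_nonneg_and_one_le_succ hα n
    have := one_le_cfA_succ hα n
    refine ⟨by omega, ?_⟩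
    rw [cfQ_succ_succ]
    nlinarith

lemma cfQ_nonneg (hα : Irrational α) (n : ℕ) : 0 ≤ cfQ α n :=
  (cfQ_nonneg_and_one_le_succ hα n).1

lemma one_le_cfQ_succ (hα : Irrational α) (n : ℕ) : 1 ≤ cfQ α (n + 1) :=
  (cfQ_nonneg_and_one_le_succ hα n).2

lemma cfQ_succ_succ_ge (hα : Irrational α) (n : ℕ) :
    cfQ α (n + 1) + cfQ α n ≤ cfQ α (n + 2) := by
  rw [cfQ_succ_succ]
  nlinarith [one_le_cfA_succ hα n, cfQ_nonneg hα (n + 1)]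

lemma cfQ_mono (hα : Irrational α) : Monotone (cfQ α) :=
  monotone_nat_of_le_succ fun
    | 0 => by simp [cfQ]
    | n + 1 => by linarith [cfQ_succ_succ_ge hα n, cfQ_nonneg hα n]

lemma cfQ_lt_succ (hα : Irrational α) (n : ℕ) : cfQ α (n + 2) < cfQ α (n + 3) := by
  linarith [cfQ_succ_succ_ge hα (n + 1), one_le_cfQ_succ hα n]

lemma cfQ_succ_mul_abs_cfTheta_add (hα : Irrational α) (n : ℕ) :
    cfQ α (n + 1) * |cfTheta α n| + cfQ α n * |cfTheta α (n + 1)| = 1 := by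
  have h := abs_mul_add_mul_of_mul_neg (cfTheta_mul_cfTheta_succ_neg hα n)
    (cfQ α (n + 1)) (-(cfQ α n : ℝ))
  have hdet : (cfQ α (n + 1) : ℝ) * cfTheta α n + -(cfQ α n : ℝ) * cfTheta α (n + 1)
      = -(-1) ^ n := by
    have := congrArg (fun z : ℤ ↦ (z : ℝ)) (cfP_mul_cfQ_succ_sub α n)
    push_cast at this
    rw [cfTheta, cfTheta, ← this]
    ring
  rw [hdet, abs_neg, abs_pow, abs_neg, abs_one, one_pow, neg_mul, sub_neg_eq_add] at h
  have hq₀ : (0 : ℝ) ≤ cfQ α n := by exact_mod_cast cfQ_nonneg hα n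
  have hq₁ : (0 : ℝ) ≤ cfQ α (n + 1) := by exact_mod_cast cfQ_nonneg hα (n + 1)
  exact (abs_of_nonneg (by positivity)).symm.trans h.symm

end ContinuedFraction

section Convergents

variable {α : ℝ}

lemma one_le_cfDen (hα : Irrational α) (n : ℕ) : 1 ≤ cfDen α n := one_le_cfQ_succ hα n

lemma cfDen_mono (hα : Irrational α) : Monotone (cfDen α) :=
  fun _ _ h ↦ cfQ_mono hα (Nat.succ_le_succ h)

lemma cfDen_lt_succ (hα : Irrational α) (n : ℕ) : cfDen α (n + 1) < cfDen α (n + 2) :=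
  cfQ_lt_succ hα n

lemma natCast_le_cfDen (hα : Irrational α) : ∀ n : ℕ, (n : ℤ) ≤ cfDen α n
  | 0 => by simp [cfDen, cfQ]
  | 1 => by simpa using one_le_cfDen hα 1
  | n + 2 => by
    have := natCast_le_cfDen hα (n + 1)
    have := cfDen_lt_succ hα n
    push_cast at *
    omega

lemma tendsto_cfDen (hα : Irrational α) : Tendsto (fun n ↦ (cfDen α n : ℝ)) atTop atTop :=
  tendsto_atTop_mono (fun n ↦ by exact_mod_cast natCast_le_cfDen hα n) tendsto_natCast_atTop_atTop

lemma exists_cfDen_le_lt (hα : Irrational α) {q : ℤ} (hq : 1 ≤ q) :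
    ∃ n, cfDen α n ≤ q ∧ q < cfDen α (n + 1) := by
  classical
  have hex : ∃ n, q < cfDen α n := ⟨q.toNat + 1, by
    have := natCast_le_cfDen hα (q.toNat + 1); push_cast at this; omega⟩
  obtain ⟨n, hn⟩ : ∃ n, Nat.find hex = n + 1 :=
    Nat.exists_eq_succ_of_ne_zero fun h ↦ by
      have := Nat.find_spec hex; rw [h] at this; simp [cfDen, cfQ] at this; omega
  exact ⟨n, not_lt.1 (Nat.find_min hex (by omega)), hn ▸ Nat.find_spec hex⟩

lemma isCoprime_cfNum_cfDen (α : ℝ) (n : ℕ) : IsCoprime (cfNum α n) (cfDen α n) :=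
  isCoprime_of_mul_sub_mul_eq_neg_one_pow (a := cfP α n) (b := cfQ α n) (j := n + 1) (by
    rw [pow_succ, ← cfP_mul_cfQ_succ_sub]; simp only [cfNum, cfDen]; ring)

lemma div_ne_cfNum_div_cfDen (hα : Irrational α) {p q : ℤ} (hpq : IsCoprime p q) {n : ℕ}
    (hlo : cfDen α n < q) (hhi : q < cfDen α (n + 1)) (m : ℕ) :
    (p : ℝ) / q ≠ cfNum α m / cfDen α m := by
  intro h
  have hq : (0 : ℝ) < q := by have := one_le_cfDen hα n; exact_mod_cast (by omega : (0 : ℤ) < q)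
  have hqm : (0 : ℝ) < cfDen α m := by exact_mod_cast one_le_cfDen hα m
  rw [div_eq_div_iff hq.ne' hqm.ne'] at h
  have hcross : p * cfDen α m = cfNum α m * q := by exact_mod_cast h
  have heq : q = cfDen α m := Int.dvd_antisymm (by exact_mod_cast hq.le) (by exact_mod_cast hqm.le)
    (hpq.symm.dvd_of_dvd_mul_left (Dvd.intro_left _ hcross.symm))
    ((isCoprime_cfNum_cfDen α m).symm.dvd_of_dvd_mul_left (Dvd.intro_left _ hcross))
  rcases le_or_gt m n with hm | hm
  · exact (cfDen_mono hα hm).not_gt (heq ▸ hlo)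
  · exact (cfDen_mono hα hm).not_gt (heq ▸ hhi)

lemma exists_eq_mul_cfQ_add_mul_cfQ (α : ℝ) (k : ℕ) (p q : ℤ) : ∃ u v : ℤ,
    q = u * cfQ α (k + 1) + v * cfQ α k ∧ p = u * cfP α (k + 1) + v * cfP α k := by
  have hdet := cfP_mul_cfQ_succ_sub α k
  have hε : ((-1 : ℤ) ^ k) ^ 2 = 1 := by rw [← pow_mul, mul_comm, pow_mul]; norm_num
  refine ⟨(-1) ^ k * (cfP α k * q - cfQ α k * p),
    (-1) ^ k * (cfQ α (k + 1) * p - cfP α (k + 1) * q), ?_, ?_⟩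
  · linear_combination (-(-1) ^ k * q) * hdet - q * hε
  · linear_combination (-(-1) ^ k * p) * hdet - p * hε

end Convergents

section LatticeInequality

variable {u v A : ℤ} {d D X Y Z : ℝ}

lemma two_mul_min_le_of_mul_neg (hdD : d ≤ D) (hD : 0 ≤ D) (hX : 0 ≤ X) (hY : 0 ≤ Y)
    (huv : u * v < 0) (hq : D ≤ u * D + v * d) :
    2 * min (d * Y) (D * X) ≤ (u * D + v * d) * |u * X - v * Y| := by
  have habs : X + Y ≤ |u * X - v * Y| := by
    rcases mul_neg_iff.1 huv with ⟨hu, hv⟩ | ⟨hu, hv⟩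
    · have hu : (1 : ℝ) ≤ u := by exact_mod_cast hu
      have hv : (v : ℝ) ≤ -1 := by exact_mod_cast (by omega : v ≤ -1)
      exact le_abs.2 (Or.inl (by nlinarith))
    · have hu : (u : ℝ) ≤ -1 := by exact_mod_cast (by omega : u ≤ -1)
      have hv : (1 : ℝ) ≤ v := by exact_mod_cast hv
      exact le_abs.2 (Or.inr (by nlinarith))
  calc 2 * min (d * Y) (D * X) ≤ d * Y + D * X := by
        linarith [min_le_left (d * Y) (D * X), min_le_right (d * Y) (D * X)]
    _ ≤ D * (X + Y) := by nlinarith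
    _ ≤ (u * D + v * d) * |u * X - v * Y| := mul_le_mul hq habs (by positivity) (hD.trans hq)

lemma two_mul_min_le_of_one_le (hu : 1 ≤ u) (hv : 1 ≤ v) (huA : u < A) (hd : 0 ≤ d)
    (hD : 0 ≤ D) (hX : 0 ≤ X) (hZ : 0 ≤ Z) (hY : Y = A * X + Z) :
    2 * min (d * Y) (min (D * X) ((A * D + d) * Z)) ≤ (u * D + v * d) * |u * X - v * Y| := by
  have hu' : (1 : ℝ) ≤ u := by exact_mod_cast hu
  have hv' : (1 : ℝ) ≤ v := by exact_mod_cast hv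
  have huA' : (u : ℝ) + 1 ≤ A := by exact_mod_cast huA
  have hY0 : 0 ≤ Y := hY ▸ add_nonneg (mul_nonneg (by linarith) hX) hZ
  have hvY : (A - u) * X + Z ≤ v * Y - u * X := by
    nlinarith [mul_nonneg (sub_nonneg.2 hv') hY0]
  have hlow : (u * D + d) * ((A - u) * X + Z) ≤ (u * D + v * d) * |u * X - v * Y| := by
    rw [abs_sub_comm]
    exact mul_le_mul (by nlinarith) (hvY.trans (le_abs_self _))
      (add_nonneg (mul_nonneg (by linarith) hX) hZ) (by positivity)
  refine le_trans ?_ hlow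
  have := min_le_left (d * Y) (min (D * X) ((A * D + d) * Z))
  have := min_le_right (d * Y) (min (D * X) ((A * D + d) * Z))
  have := min_le_left (D * X) ((A * D + d) * Z)
  have := min_le_right (D * X) ((A * D + d) * Z)
  by_cases h2 : 2 ≤ u * (A - u)
  · have h2' : (2 : ℝ) ≤ u * (A - u) := by exact_mod_cast h2
    nlinarith [mul_nonneg hD hX, mul_nonneg hd hZ, mul_nonneg hd hX, mul_nonneg hD hZ]
  · -- `u = 1`, `A = 2`: `(D + d)(X + Z)` dominates an average of the three terms of the minimum
    obtain ⟨rfl, rfl⟩ : u = 1 ∧ A = 2 := by constructor <;> nlinarith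
    simp only [Int.cast_one, Int.cast_ofNat] at *
    subst hY
    linarith

lemma two_mul_min_le_of_nonneg (hu : 0 ≤ u) (hv : 0 ≤ v) (hd : 0 < d) (hdD : d < D) (hX : 0 ≤ X)
    (hZ : 0 ≤ Z) (hY : Y = A * X + Z) (hY0 : 0 ≤ Y) (hlo : D ≤ u * D + v * d)
    (hhi : u * D + v * d < A * D + d) (huv : (u, v) ≠ (1, 0)) :
    2 * min (d * Y) (min (D * X) ((A * D + d) * Z)) ≤ (u * D + v * d) * |u * X - v * Y| := by
  have hD : 0 < D := hd.trans hdD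
  have := min_le_left (d * Y) (min (D * X) ((A * D + d) * Z))
  have := min_le_right (d * Y) (min (D * X) ((A * D + d) * Z))
  have := min_le_left (D * X) ((A * D + d) * Z)
  rcases hu.eq_or_lt with rfl | hu1
  · have hv : (2 : ℝ) ≤ v := by
      push_cast at hlo
      have : (1 : ℝ) < v := by nlinarith
      exact_mod_cast (by exact_mod_cast this : (1 : ℤ) < v)
    simp only [Int.cast_zero, zero_mul, zero_add, zero_sub, abs_neg]
    rw [abs_of_nonneg (by positivity)]
    nlinarith [mul_nonneg (by nlinarith : (0 : ℝ) ≤ v * v - 4) (mul_nonneg hd.le hY0)]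
  rcases hv.eq_or_lt with rfl | hv1
  · have hu2 : (2 : ℝ) ≤ u := by
      have : u ≠ 1 := fun h ↦ huv (by rw [h])
      exact_mod_cast (by omega : (2 : ℤ) ≤ u)
    simp only [Int.cast_zero, zero_mul, add_zero, sub_zero]
    rw [abs_of_nonneg (by positivity)]
    nlinarith [mul_nonneg (by nlinarith : (0 : ℝ) ≤ u * u - 4) (mul_nonneg hD.le hX)]
  have huA : u < A := by
    have : (1 : ℝ) ≤ v := by exact_mod_cast hv1
    have : (u : ℝ) < A := by nlinarith
    exact_mod_cast this
  exact two_mul_min_le_of_one_le hu1 hv1 huA hd.le hD.le hX hZ hY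

/-- Here `(u, v)` are the coordinates of `(p, q)` in the basis of two consecutive convergents, with
`D = qₙ`, `d = qₙ₋₁`, `X = ξₙ`, `Y = ξₙ₋₁`, `Z = ξₙ₊₁` and `A = aₙ₊₁`. -/
lemma two_mul_min_le_mul_abs_sub (hd : 0 < d) (hdD : d < D) (hX : 0 ≤ X) (hZ : 0 ≤ Z)
    (hY : Y = A * X + Z) (hlo : D ≤ u * D + v * d) (hhi : u * D + v * d < A * D + d)
    (huv : (u, v) ≠ (1, 0)) :
    2 * min (d * Y) (min (D * X) ((A * D + d) * Z)) ≤ (u * D + v * d) * |u * X - v * Y| := by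
  have hD : 0 < D := hd.trans hdD
  have hA : (1 : ℝ) ≤ A := by
    by_contra! hA
    have : A < 1 := by exact_mod_cast hA
    have : (A : ℝ) ≤ 0 := by exact_mod_cast (by omega : A ≤ 0)
    nlinarith
  have hY0 : 0 ≤ Y := hY ▸ add_nonneg (mul_nonneg (by linarith) hX) hZ
  rcases lt_or_ge (u * v) 0 with huv' | huv'
  · have := two_mul_min_le_of_mul_neg hdD.le hD.le hX hY0 huv' hlo
    have := min_le_min_left (d * Y) (min_le_left (D * X) ((A * D + d) * Z))
    linarith
  have hu : 0 ≤ u := by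
    by_contra! hu
    have : (u : ℝ) ≤ -1 := by exact_mod_cast (by omega : u ≤ -1)
    have : (v : ℝ) ≤ 0 := by exact_mod_cast (by nlinarith : v ≤ 0)
    nlinarith
  have hv : 0 ≤ v := by
    by_contra! hv
    have : (v : ℝ) ≤ -1 := by exact_mod_cast (by omega : v ≤ -1)
    have : (u : ℝ) ≤ 0 := by exact_mod_cast (by nlinarith : u ≤ 0)
    nlinarith
  exact two_mul_min_le_of_nonneg hu hv hd hdD hX hZ hY hY0 hlo hhi huv

end LatticeInequality

section Approximation

variable {α : ℝ}

lemma cfQ_succ_mul_abs_cfTheta_le_one (hα : Irrational α) (n : ℕ) :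
    cfQ α (n + 1) * |cfTheta α n| ≤ 1 := by
  have : (0 : ℝ) ≤ cfQ α n := by exact_mod_cast cfQ_nonneg hα n
  linarith [cfQ_succ_mul_abs_cfTheta_add hα n, mul_nonneg this (abs_nonneg (cfTheta α (n + 1)))]

lemma two_mul_min_le_mul_abs_sub_of_cfDen_le (hα : Irrational α) (n : ℕ) {p q : ℤ}
    (hlo : cfDen α (n + 2) ≤ q) (hhi : q < cfDen α (n + 3))
    (hne : ¬(p = cfNum α (n + 2) ∧ q = cfDen α (n + 2))) :
    2 * min (cfDen α (n + 1) * cfXi α (n + 1))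
        (min (cfDen α (n + 2) * cfXi α (n + 2)) (cfDen α (n + 3) * cfXi α (n + 3)))
      ≤ q * |q * α - p| := by
  obtain ⟨u, v, hq, hp⟩ := exists_eq_mul_cfQ_add_mul_cfQ α (n + 2) p q
  have hqR : (q : ℝ) = u * cfQ α (n + 3) + v * cfQ α (n + 2) := by exact_mod_cast hq
  have habs : |q * α - p| = |(u * |cfTheta α (n + 3)| - v * |cfTheta α (n + 2)|)| := by
    rw [← abs_mul_add_mul_of_mul_neg (mul_comm (cfTheta α _) _ ▸
      cfTheta_mul_cfTheta_succ_neg hα (n + 2)), hqR, hp]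
    simp only [cfTheta]
    push_cast
    congr 1
    ring
  have hQ : (cfDen α (n + 3) : ℝ) = cfA α (n + 3) * cfQ α (n + 3) + cfQ α (n + 2) := by
    rw [cfDen, cfQ_succ_succ]; push_cast; ring
  have hlo' : (cfQ α (n + 3) : ℝ) ≤ u * cfQ α (n + 3) + v * cfQ α (n + 2) := by
    rw [← hqR]; exact_mod_cast hlo
  have hhi' : (u * cfQ α (n + 3) + v * cfQ α (n + 2) : ℝ) <
      cfA α (n + 3) * cfQ α (n + 3) + cfQ α (n + 2) := by
    rw [← hqR, ← hQ]; exact_mod_cast hhi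
  have huv : (u, v) ≠ (1, 0) := by
    rintro ⟨⟩
    exact hne ⟨by rw [hp]; simp [cfNum], by rw [hq]; simp [cfDen]⟩
  rw [habs, hqR, cfXi_eq_abs_cfTheta, cfXi_eq_abs_cfTheta, cfXi_eq_abs_cfTheta, hQ]
  exact two_mul_min_le_mul_abs_sub (by exact_mod_cast one_le_cfQ_succ hα (n + 1))
    (by exact_mod_cast cfQ_lt_succ hα n) (abs_nonneg _) (abs_nonneg _)
    (abs_cfTheta_eq hα (n + 2)) hlo' hhi' huv

lemma exists_div_ne_convergent_of_one_lt_cfA (hα : Irrational α) (k : ℕ)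
    (hA : 1 < cfA α (k + 3)) : ∃ p q : ℤ, cfDen α (k + 2) < q ∧
      (∀ m, (p : ℝ) / q ≠ cfNum α m / cfDen α m) ∧ (q : ℝ) * |q * α - p| ≤ 2 := by
  have h₂ : 1 ≤ cfQ α (k + 2) := one_le_cfQ_succ hα (k + 1)
  have h₃ : 1 ≤ cfQ α (k + 3) := one_le_cfQ_succ hα (k + 2)
  have hlo : cfQ α (k + 3) < cfQ α (k + 4) - cfQ α (k + 3) := by
    rw [cfQ_succ_succ α (k + 2)]; nlinarith
  have hhi : cfQ α (k + 4) - cfQ α (k + 3) < cfQ α (k + 4) := by omega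
  have hcop : IsCoprime (cfP α (k + 4) - cfP α (k + 3)) (cfQ α (k + 4) - cfQ α (k + 3)) :=
    isCoprime_of_mul_sub_mul_eq_neg_one_pow (a := cfP α (k + 3)) (b := cfQ α (k + 3))
      (j := k + 4) (by rw [pow_succ, ← cfP_mul_cfQ_succ_sub]; ring)
  refine ⟨_, _, hlo, div_ne_cfNum_div_cfDen hα hcop (n := k + 2) hlo hhi, ?_⟩
  have hval : ((cfQ α (k + 4) - cfQ α (k + 3) : ℤ) : ℝ) * α - (cfP α (k + 4) - cfP α (k + 3) : ℤ)
      = cfTheta α (k + 4) - cfTheta α (k + 3) := by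
    simp only [cfTheta]; push_cast; ring
  have hθ : |cfTheta α (k + 4) - cfTheta α (k + 3)| ≤ 2 * |cfTheta α (k + 3)| := by
    linarith [abs_sub (cfTheta α (k + 4)) (cfTheta α (k + 3)), abs_cfTheta_succ_lt hα (k + 3)]
  rw [hval]
  calc _ ≤ (cfQ α (k + 4) : ℝ) * (2 * |cfTheta α (k + 3)|) :=
        mul_le_mul (by exact_mod_cast hhi.le) hθ (abs_nonneg _) (by exact_mod_cast (by omega))
    _ ≤ 2 := by linarith [cfQ_succ_mul_abs_cfTheta_le_one hα (k + 3)]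

lemma exists_div_ne_convergent_of_cfA_eq_one (hα : Irrational α) (k : ℕ)
    (hA : cfA α (k + 3) = 1) : ∃ p q : ℤ, cfDen α (k + 3) < q ∧
      (∀ m, (p : ℝ) / q ≠ cfNum α m / cfDen α m) ∧ (q : ℝ) * |q * α - p| ≤ 6 := by
  have hQ : cfQ α (k + 4) = cfQ α (k + 3) + cfQ α (k + 2) := by rw [cfQ_succ_succ, hA, one_mul]
  have hP : cfP α (k + 4) = cfP α (k + 3) + cfP α (k + 2) := by rw [cfP_succ_succ, hA, one_mul]
  have h₂ : 1 ≤ cfQ α (k + 2) := one_le_cfQ_succ hα (k + 1)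
  have h₂₃ : cfQ α (k + 2) < cfQ α (k + 3) := cfQ_lt_succ hα k
  have hlo : cfQ α (k + 4) < cfQ α (k + 4) + cfQ α (k + 2) := by omega
  have hhi : cfQ α (k + 4) + cfQ α (k + 2) < cfQ α (k + 5) := by
    linarith [cfQ_succ_succ_ge hα (k + 3)]
  have hcop : IsCoprime (cfP α (k + 4) + cfP α (k + 2)) (cfQ α (k + 4) + cfQ α (k + 2)) :=
    isCoprime_of_mul_sub_mul_eq_neg_one_pow (a := cfP α (k + 2)) (b := cfQ α (k + 2))
      (j := k + 3) (by rw [hP, hQ, pow_succ, ← cfP_mul_cfQ_succ_sub]; ring)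
  refine ⟨_, _, hlo, div_ne_cfNum_div_cfDen hα hcop (n := k + 3) hlo hhi, ?_⟩
  have hval : ((cfQ α (k + 4) + cfQ α (k + 2) : ℤ) : ℝ) * α - (cfP α (k + 4) + cfP α (k + 2) : ℤ)
      = cfTheta α (k + 4) + cfTheta α (k + 2) := by
    simp only [cfTheta]; push_cast; ring
  have hθ : |cfTheta α (k + 4) + cfTheta α (k + 2)| ≤ 2 * |cfTheta α (k + 2)| := by
    linarith [abs_add_le (cfTheta α (k + 4)) (cfTheta α (k + 2)), abs_cfTheta_succ_lt hα (k + 3),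
      abs_cfTheta_succ_lt hα (k + 2)]
  have hq : ((cfQ α (k + 4) + cfQ α (k + 2) : ℤ) : ℝ) ≤ 3 * cfQ α (k + 3) := by
    exact_mod_cast (by omega : cfQ α (k + 4) + cfQ α (k + 2) ≤ 3 * cfQ α (k + 3))
  rw [hval]
  calc _ ≤ 3 * (cfQ α (k + 3) : ℝ) * (2 * |cfTheta α (k + 2)|) :=
        mul_le_mul hq hθ (abs_nonneg _) (by exact_mod_cast (by omega))
    _ ≤ 6 := by linarith [cfQ_succ_mul_abs_cfTheta_le_one hα (k + 2)]

lemma exists_div_ne_convergent (hα : Irrational α) (k : ℕ) : ∃ p q : ℤ, cfDen α k < q ∧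
    (∀ m, (p : ℝ) / q ≠ cfNum α m / cfDen α m) ∧ (q : ℝ) * |q * α - p| ≤ 6 := by
  rcases (one_le_cfA_succ hα (k + 2)).lt_or_eq with hA | hA
  · obtain ⟨p, q, hq, hne, hle⟩ := exists_div_ne_convergent_of_one_lt_cfA hα k hA
    exact ⟨p, q, (cfDen_mono hα (by omega)).trans_lt hq, hne, hle.trans (by norm_num)⟩
  · obtain ⟨p, q, hq, hne, hle⟩ := exists_div_ne_convergent_of_cfA_eq_one hα k hA.symm
    exact ⟨p, q, (cfDen_mono hα (by omega)).trans_lt hq, hne, hle⟩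

lemma exists_pos_le_abs_mul_sub (hα : Irrational α) (M : ℤ) :
    ∃ δ > 0, ∀ p q : ℤ, 1 ≤ q → q ≤ M → δ ≤ |q * α - p| := by
  set S := insert 1 ((Finset.Icc 1 M).image fun k : ℤ ↦ |k * α - round (k * α)|)
  refine ⟨S.min' (Finset.insert_nonempty _ _), (Finset.lt_min'_iff _ _).2 ?_, ?_⟩
  · simp only [S, Finset.mem_insert, Finset.mem_image, Finset.mem_Icc]
    rintro _ (rfl | ⟨k, ⟨hk, -⟩, rfl⟩)
    · exact one_pos
    · exact abs_pos.2 (sub_ne_zero.2 ((hα.intCast_mul (by omega)).ne_int _))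
  · intro p q h1 h2
    exact (S.min'_le _ (Finset.mem_insert_of_mem (Finset.mem_image_of_mem _
      (Finset.mem_Icc.2 ⟨h1, h2⟩)))).trans (round_le _ p)

end Approximation

section Liminf

variable {α : ℝ}

lemma psiFn_nonneg (α t : ℝ) : 0 ≤ psiFn α t :=
  Real.sInf_nonneg (by rintro _ ⟨p, q, -, -, rfl⟩; positivity)

lemma psi2Fn_nonneg (α t : ℝ) : 0 ≤ psi2Fn α t :=
  Real.sInf_nonneg (by rintro _ ⟨p, q, -, -, -, rfl⟩; positivity)

lemma isBoundedUnder_ge_mul_of_nonneg {f : ℝ → ℝ} (hf : ∀ t, 0 ≤ f t) :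
    IsBoundedUnder (· ≥ ·) atTop fun t ↦ t * f t :=
  isBoundedUnder_of_eventually_ge (a := 0)
    ((eventually_ge_atTop 0).mono fun t ht ↦ mul_nonneg ht (hf t))

lemma psiFn_cfDen_le_cfXi (hα : Irrational α) (n : ℕ) : psiFn α (cfDen α n) ≤ cfXi α n :=
  csInf_le ⟨0, by rintro _ ⟨p, q, -, -, rfl⟩; positivity⟩
    ⟨cfNum α n, cfDen α n, one_le_cfDen hα n, le_rfl, rfl⟩

lemma psi2sFn_le {t : ℝ} {p q : ℤ} (hq : 1 ≤ q) (hqt : (q : ℝ) ≤ t)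
    (hpq : ∀ m, (p : ℝ) / q ≠ cfNum α m / cfDen α m) : psi2sFn α t ≤ |q * α - p| :=
  csInf_le ⟨0, by rintro _ ⟨p, q, -, -, -, rfl⟩; positivity⟩ ⟨p, q, hq, hqt, hpq, rfl⟩

lemma frequently_mul_psi2sFn_le (hα : Irrational α) :
    ∃ᶠ t in atTop, t * psi2sFn α t ≤ 6 := by
  refine frequently_atTop.2 fun b ↦ ?_
  obtain ⟨k, hk⟩ := ((tendsto_cfDen hα).eventually_ge_atTop b).exists
  obtain ⟨p, q, hkq, hpq, hle⟩ := exists_div_ne_convergent hα k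
  have hq : 1 ≤ q := (one_le_cfDen hα k).trans hkq.le
  refine ⟨q, hk.trans (by exact_mod_cast hkq.le), ?_⟩
  exact (mul_le_mul_of_nonneg_left (psi2sFn_le hq le_rfl hpq) (by positivity)).trans hle

lemma eventually_psi2Fn_le_psi2sFn (hα : Irrational α) :
    ∀ᶠ t in atTop, psi2Fn α t ≤ psi2sFn α t := by
  obtain ⟨p, q, hkq, hpq, -⟩ := exists_div_ne_convergent hα 0
  have hq : 1 ≤ q := (one_le_cfDen hα 0).trans hkq.le
  filter_upwards [eventually_ge_atTop (q : ℝ)] with t ht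
  refine csInf_le_csInf ⟨0, by rintro _ ⟨p, q, -, -, -, rfl⟩; positivity⟩
    ⟨_, p, q, hq, ht, hpq, rfl⟩ ?_
  rintro _ ⟨p, q, hq, hqt, hpq, rfl⟩
  exact ⟨p, q, hq, hqt, fun n hn ↦ hpq n (by rw [hn.1, hn.2]), rfl⟩

lemma isCoboundedUnder_ge_mul_psi2Fn (hα : Irrational α) :
    IsCoboundedUnder (· ≥ ·) atTop fun t ↦ t * psi2Fn α t :=
  IsCoboundedUnder.of_frequently_le <| (frequently_mul_psi2sFn_le hα).mp <|
    ((eventually_psi2Fn_le_psi2sFn hα).and (eventually_ge_atTop 0)).mono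
      fun _ h hle ↦ (mul_le_mul_of_nonneg_left h.1 h.2).trans hle

lemma eventually_lt_cfDen_mul_cfXi (hα : Irrational α) {c : ℝ} (hc : c < lamOf α) :
    ∀ᶠ n in atTop, c < cfDen α n * cfXi α n :=
  ((tendsto_cfDen hα).eventually
    (eventually_lt_of_lt_liminf hc (isBoundedUnder_ge_mul_of_nonneg (psiFn_nonneg α)))).mono
    fun n hn ↦ hn.trans_le (mul_le_mul_of_nonneg_left (psiFn_cfDen_le_cfXi hα n)
      (by exact_mod_cast (one_le_cfDen hα n).trans' zero_le_one))

lemma two_mul_le_mul_abs_sub_of_lt_cfDen_mul_cfXi (hα : Irrational α) {c : ℝ} {N : ℕ}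
    (hN : ∀ n ≥ N, c < cfDen α n * cfXi α n) {p q : ℤ} (hq : cfDen α (N + 2) < q)
    (hpq : ∀ n, ¬(p = cfNum α n ∧ q = cfDen α n)) : 2 * c ≤ q * |q * α - p| := by
  obtain ⟨n, hnq, hqn⟩ := exists_cfDen_le_lt hα ((one_le_cfDen hα _).trans hq.le)
  obtain ⟨k, rfl⟩ : ∃ k, n = k + 2 :=
    ⟨n - 2, by by_contra h; exact (cfDen_mono hα (by omega : n + 1 ≤ N + 2)).not_gt (hq.trans hqn)⟩
  have hkN : N ≤ k := by
    by_contra h; exact (cfDen_mono hα (by omega : k + 3 ≤ N + 2)).not_gt (hq.trans hqn)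
  have hmin := two_mul_min_le_mul_abs_sub_of_cfDen_le hα k hnq hqn (hpq (k + 2))
  have := hN (k + 1) (by omega)
  have := hN (k + 2) (by omega)
  have := hN (k + 3) (by omega)
  have : c < min (cfDen α (k + 1) * cfXi α (k + 1))
      (min (cfDen α (k + 2) * cfXi α (k + 2)) (cfDen α (k + 3) * cfXi α (k + 3))) := by
    simp only [lt_min_iff]; tauto
  linarith

lemma two_mul_le_kOf (hα : Irrational α) {c : ℝ} (hc : ∀ᶠ n in atTop, c < cfDen α n * cfXi α n) :
    2 * c ≤ kOf α := by
  obtain ⟨N, hN⟩ := eventually_atTop.1 hc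
  obtain ⟨δ, hδ, hδle⟩ := exists_pos_le_abs_mul_sub hα (cfDen α (N + 2))
  obtain ⟨p₀, q₀, hq₀, hpq₀, -⟩ := exists_div_ne_convergent hα 0
  refine le_liminf_of_le (isCoboundedUnder_ge_mul_psi2Fn hα) ?_
  filter_upwards [eventually_ge_atTop (q₀ : ℝ), eventually_gt_atTop 0,
    (tendsto_id.atTop_mul_const hδ).eventually_ge_atTop (2 * c)] with t ht₀ ht htδ
  rw [← div_le_iff₀' ht]
  refine le_csInf ⟨_, p₀, q₀, (one_le_cfDen hα 0).trans hq₀.le, ht₀,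
    fun n hn ↦ hpq₀ n (by rw [hn.1, hn.2]), rfl⟩ ?_
  rintro _ ⟨p, q, hq, hqt, hpq, rfl⟩
  rw [div_le_iff₀' ht]
  rcases le_or_gt q (cfDen α (N + 2)) with hqN | hqN
  · exact htδ.trans (mul_le_mul_of_nonneg_left (hδle p q hq hqN) ht.le)
  · exact (two_mul_le_mul_abs_sub_of_lt_cfDen_mul_cfXi hα hN hqN hpq).trans
      (mul_le_mul_of_nonneg_right hqt (abs_nonneg _))

end Liminf

/-- For every irrational real number `α` one has `𝔨*(α) ≥ 𝔨(α) ≥ 2·λ(α)`. -/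
theorem stmt0 (α : ℝ) (hα : Irrational α) :
    2 * lamOf α ≤ kOf α ∧ kOf α ≤ ksOf α := by
  refine ⟨?_, ?_⟩
  · have : lamOf α ≤ kOf α / 2 := le_of_forall_lt_imp_le_of_dense fun c hc ↦ by
      linarith [two_mul_le_kOf hα (eventually_lt_cfDen_mul_cfXi hα hc)]
    linarith
  · refine liminf_le_liminf ?_ (isBoundedUnder_ge_mul_of_nonneg (psi2Fn_nonneg α))
      (IsCoboundedUnder.of_frequently_le (frequently_mul_psi2sFn_le hα))
    filter_upwards [eventually_psi2Fn_le_psi2sFn hα, eventually_ge_atTop 0] with t h ht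
    exact mul_le_mul_of_nonneg_left h ht
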